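/- arXiv:1611.06346 — 7 statements merged into one kernel-verified Lean document; each statement's English description precedes it below -/
import Mathlib

section
/- The quasi-Poincaré compactification T is a bijection from ℝⁿ onto the disk D = {x ∈ ℝⁿ : p(x) < 1}. -/
open Finset

/-- The quasi-Poincaré functional `p(y) = (∑_{i∈I} aᵢ yᵢ^{2βᵢ})^{1/(2c)}`,
where `I = {i : 0 < αᵢ}`. -/
noncomputable def pF {n : ℕ} (α β : Fin n → ℕ) (a : Fin n → ℝ) (c : ℕ)
    (y : Fin n → ℝ) : ℝ :=
  (∑ i ∈ univ.filter (fun i => 0 < α i), a i * y i ^ (2 * β i)) ^ ((1 : ℝ) / (2 * (c : ℝ)))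

/-- The quasi-Poincaré functional `κ(y) = (1 + p(y)^{2c})^{1/(2c)}`. -/
noncomputable def kF {n : ℕ} (α β : Fin n → ℕ) (a : Fin n → ℝ) (c : ℕ)
    (y : Fin n → ℝ) : ℝ :=
  (1 + pF α β a c y ^ (2 * c)) ^ ((1 : ℝ) / (2 * (c : ℝ)))

/-- The quasi-Poincaré compactification `T(y)ᵢ = yᵢ / κ(y)^{αᵢ}`. -/
noncomputable def TqP {n : ℕ} (α β : Fin n → ℕ) (a : Fin n → ℝ) (c : ℕ)
    (y : Fin n → ℝ) : Fin n → ℝ :=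
  fun i => y i / (kF α β a c y) ^ (α i)

/-!
Write `Q = p^{2c} = ∑_{i∈I} aᵢ yᵢ^{2βᵢ}`. Since `αᵢβᵢ = c`, the dilation
`δₛ(y)ᵢ = s^{αᵢ} yᵢ` scales `Q` by `s^{2c}`, and `T y = δ_{1/κ(y)} y` with `κ(y)^{2c} = 1 + Q(y)`.
Hence `Q(T y) = Q(y) / (1 + Q(y)) < 1`, and the map `x ↦ δ_{(1 - Q(x))^{-1/(2c)}} x` is a two-sided
inverse of `T` between `ℝⁿ` and `{Q < 1} = D`.
-/

lemma rpow_one_div_two_mul_pow {c : ℕ} (hc : c ≠ 0) {u : ℝ} (hu : 0 ≤ u) :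
    (u ^ (1 / (2 * (c : ℝ)))) ^ (2 * c) = u := by
  rw [show (1 : ℝ) / (2 * c) = ((2 * c : ℕ) : ℝ)⁻¹ by push_cast; ring]
  exact Real.rpow_inv_natCast_pow hu (by omega)

lemma rpow_one_div_two_mul_eq_of_pow_eq {c : ℕ} (hc : c ≠ 0) {u s : ℝ} (hs : 0 ≤ s)
    (h : s ^ (2 * c) = u) : u ^ (1 / (2 * (c : ℝ))) = s := by
  rw [← h, show (1 : ℝ) / (2 * c) = ((2 * c : ℕ) : ℝ)⁻¹ by push_cast; ring]
  exact Real.pow_rpow_inv_natCast hs (by omega)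

section QuasiPoincare

variable {n : ℕ} (α β : Fin n → ℕ) (a : Fin n → ℝ) (c : ℕ)

noncomputable def pSum (y : Fin n → ℝ) : ℝ :=
  ∑ i ∈ univ.filter (fun i => 0 < α i), a i * y i ^ (2 * β i)

def quasiDilation (s : ℝ) (y : Fin n → ℝ) : Fin n → ℝ :=
  fun i => s ^ α i * y i

noncomputable def TqPInv (x : Fin n → ℝ) : Fin n → ℝ :=
  quasiDilation α ((1 - pSum α β a x) ^ (1 / (2 * (c : ℝ))))⁻¹ x

variable {α β a c}

lemma quasiDilation_quasiDilation (s t : ℝ) (y : Fin n → ℝ) :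
    quasiDilation α s (quasiDilation α t y) = quasiDilation α (s * t) y := by
  funext i
  simp only [quasiDilation, mul_pow, mul_assoc]

lemma quasiDilation_one (y : Fin n → ℝ) : quasiDilation α 1 y = y := by
  funext i
  simp only [quasiDilation, one_pow, one_mul]

variable (α β) in
lemma pSum_nonneg (ha : ∀ i, 0 ≤ a i) (y : Fin n → ℝ) : 0 ≤ pSum α β a y :=
  sum_nonneg fun i _ => mul_nonneg (ha i) ((even_two_mul (β i)).pow_nonneg _)

lemma pSum_quasiDilation (hαβ : ∀ i, 0 < α i → α i * β i = c) (s : ℝ) (y : Fin n → ℝ) :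
    pSum α β a (quasiDilation α s y) = s ^ (2 * c) * pSum α β a y := by
  rw [pSum, pSum, mul_sum]
  refine sum_congr rfl fun i hi => ?_
  rw [quasiDilation, mul_pow, ← pow_mul, ← hαβ i (mem_filter.1 hi).2]
  ring

lemma pF_pow (hc : c ≠ 0) (ha : ∀ i, 0 ≤ a i) (y : Fin n → ℝ) :
    pF α β a c y ^ (2 * c) = pSum α β a y :=
  rpow_one_div_two_mul_pow hc (pSum_nonneg α β ha y)

lemma pF_lt_one_iff (hc : c ≠ 0) (ha : ∀ i, 0 ≤ a i) (y : Fin n → ℝ) :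
    pF α β a c y < 1 ↔ pSum α β a y < 1 :=
  Real.rpow_lt_one_iff' (pSum_nonneg α β ha y) (by positivity)

lemma kF_eq_of_pow_eq (hc : c ≠ 0) (ha : ∀ i, 0 ≤ a i) {y : Fin n → ℝ} {s : ℝ} (hs : 0 ≤ s)
    (h : s ^ (2 * c) = 1 + pSum α β a y) : kF α β a c y = s := by
  rw [kF, pF_pow hc ha]
  exact rpow_one_div_two_mul_eq_of_pow_eq hc hs h

lemma kF_pow (hc : c ≠ 0) (ha : ∀ i, 0 ≤ a i) (y : Fin n → ℝ) :
    kF α β a c y ^ (2 * c) = 1 + pSum α β a y := by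
  rw [kF, pF_pow hc ha]
  exact rpow_one_div_two_mul_pow hc (by linarith [pSum_nonneg α β ha y])

variable (α β) in
lemma kF_pos (hc : c ≠ 0) (ha : ∀ i, 0 ≤ a i) (y : Fin n → ℝ) : 0 < kF α β a c y :=
  Real.rpow_pos_of_pos (by rw [pF_pow hc ha]; linarith [pSum_nonneg α β ha y]) _

lemma TqP_eq_quasiDilation (y : Fin n → ℝ) :
    TqP α β a c y = quasiDilation α (kF α β a c y)⁻¹ y := by
  funext i
  simp only [TqP, quasiDilation, inv_pow, div_eq_inv_mul]

lemma pSum_TqP (hc : c ≠ 0) (hαβ : ∀ i, 0 < α i → α i * β i = c) (ha : ∀ i, 0 ≤ a i)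
    (y : Fin n → ℝ) :
    pSum α β a (TqP α β a c y) = pSum α β a y / (1 + pSum α β a y) := by
  rw [TqP_eq_quasiDilation, pSum_quasiDilation hαβ, inv_pow, kF_pow hc ha, inv_mul_eq_div]

lemma pSum_TqP_lt_one (hc : c ≠ 0) (hαβ : ∀ i, 0 < α i → α i * β i = c) (ha : ∀ i, 0 ≤ a i)
    (y : Fin n → ℝ) : pSum α β a (TqP α β a c y) < 1 := by
  have hQ := pSum_nonneg α β ha y
  rw [pSum_TqP hc hαβ ha, div_lt_one (by linarith)]
  linarith

lemma TqPInv_TqP (hc : c ≠ 0) (hαβ : ∀ i, 0 < α i → α i * β i = c) (ha : ∀ i, 0 ≤ a i)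
    (y : Fin n → ℝ) : TqPInv α β a c (TqP α β a c y) = y := by
  have hk := kF_pos α β hc ha y
  have hQ : 0 < 1 + pSum α β a y := by linarith [pSum_nonneg α β ha y]
  have hroot : (1 - pSum α β a (TqP α β a c y)) ^ (1 / (2 * (c : ℝ))) = (kF α β a c y)⁻¹ := by
    refine rpow_one_div_two_mul_eq_of_pow_eq hc (inv_nonneg.2 hk.le) ?_
    rw [pSum_TqP hc hαβ ha, inv_pow, kF_pow hc ha]
    field_simp
    ring
  rw [TqPInv, hroot, inv_inv, TqP_eq_quasiDilation, quasiDilation_quasiDilation,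
    mul_inv_cancel₀ hk.ne', quasiDilation_one]

lemma TqP_TqPInv (hc : c ≠ 0) (hαβ : ∀ i, 0 < α i → α i * β i = c) (ha : ∀ i, 0 ≤ a i)
    {x : Fin n → ℝ} (hx : pSum α β a x < 1) : TqP α β a c (TqPInv α β a c x) = x := by
  set l := (1 - pSum α β a x) ^ (1 / (2 * (c : ℝ)))
  have hQ : 0 < 1 - pSum α β a x := by linarith
  have hl : 0 < l := Real.rpow_pos_of_pos hQ _
  have hl_pow : l ^ (2 * c) = 1 - pSum α β a x := rpow_one_div_two_mul_pow hc hQ.le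
  have hk : kF α β a c (TqPInv α β a c x) = l⁻¹ := by
    refine kF_eq_of_pow_eq hc ha (inv_nonneg.2 hl.le) ?_
    rw [TqPInv, pSum_quasiDilation hαβ, inv_pow, hl_pow]
    field_simp
    ring
  rw [TqP_eq_quasiDilation, hk, inv_inv, TqPInv, quasiDilation_quasiDilation,
    mul_inv_cancel₀ hl.ne', quasiDilation_one]

end QuasiPoincare

theorem quasiPoincare_bijOn_general
    {n : ℕ} (α β : Fin n → ℕ) (a : Fin n → ℝ) (c : ℕ)
    (hc : 0 < c)
    (hαβ : ∀ i, 0 < α i → α i * β i = c)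
    (ha : ∀ i, 1 ≤ a i) :
    Set.BijOn (TqP α β a c) Set.univ {x : Fin n → ℝ | pF α β a c x < 1} := by
  have hc₀ : c ≠ 0 := hc.ne'
  have ha₀ : ∀ i, 0 ≤ a i := fun i => zero_le_one.trans (ha i)
  have hD : ∀ x, pF α β a c x < 1 ↔ pSum α β a x < 1 := pF_lt_one_iff hc₀ ha₀
  refine Set.InvOn.bijOn (f' := TqPInv α β a c) ⟨fun y _ => ?_, fun x hx => ?_⟩
    (fun y _ => (hD _).2 (pSum_TqP_lt_one hc₀ hαβ ha₀ y)) (Set.mapsTo_univ _ _)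
  · exact TqPInv_TqP hc₀ hαβ ha₀ y
  · exact TqP_TqPInv hc₀ hαβ ha₀ ((hD x).1 hx)

/-- The quasi-Poincaré compactification `T` is a bijection from `ℝⁿ` onto the
disk `D = {x : p(x) < 1}`. -/
theorem quasiPoincare_bijOn
    {n : ℕ} (hn : 1 ≤ n) (α β : Fin n → ℕ) (a : Fin n → ℝ) (c : ℕ)
    (hα : ∃ i, 0 < α i) (hc : 0 < c)
    (hαβ : ∀ i, 0 < α i → α i * β i = c)
    (hβ0 : ∀ i, α i = 0 → β i = 0)
    (ha : ∀ i, 1 ≤ a i) :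
    Set.BijOn (TqP α β a c) Set.univ {x : Fin n → ℝ | pF α β a c x < 1} :=
  quasiPoincare_bijOn_general α β a c hc hαβ ha
end

section
/- For every y ∈ ℝⁿ and every vector v ∈ ℝⁿ, one has v − κ(y)^{−1} (∑_{i=1}^{n} ∂κ/∂yᵢ(y) · vᵢ) · (α₁y₁,…,αₙyₙ) = 0 if and only if v = 0. Consequently, for any map f : ℝⁿ → ℝⁿ, a point y ∈ ℝⁿ is an equilibrium of y' = f(y) (i.e. f(y) = 0) if and only if the compactified vector field f(y) − κ(y)^{−1}⟨∇κ(y), f(y)⟩ (α₁y₁,…,αₙyₙ) vanishes at y. -/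
open Finset

/-! With weights `αᵢ`, `Q(y) = ∑_{i∈I} aᵢ yᵢ^{2βᵢ} = p(y)^{2c}` is quasi-homogeneous of degree `2c`,
so Euler's identity gives `⟨∇Q(y), w⟩ = 2c Q(y)` for `w = (αᵢ yᵢ)ᵢ`, hence
`κ(y)⁻¹ ⟨∇κ(y), w⟩ = Q(y) / (1 + Q(y)) < 1`. The vanishing of the compactified field at `v`
says `v = ℓ(v) w` for the linear form `ℓ = κ(y)⁻¹ ⟨∇κ(y), ·⟩`; applying `ℓ` gives
`ℓ(v) (1 - ℓ(w)) = 0`, so `ℓ(v) = 0` and `v = 0`. -/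

theorem sub_smul_eq_zero_iff_of_apply_ne_one {K E : Type*} [Field K] [AddCommGroup E]
    [Module K E] (ℓ : E →ₗ[K] K) {w : E} (hw : ℓ w ≠ 1) (v : E) :
    v - ℓ v • w = 0 ↔ v = 0 := by
  refine ⟨fun h => ?_, fun h => by simp [h]⟩
  have hv : v = ℓ v • w := sub_eq_zero.mp h
  have hℓv : ℓ v * (1 - ℓ w) = 0 := by
    have := congrArg ℓ hv
    rw [map_smul, smul_eq_mul] at this
    linear_combination this
  have : ℓ v = 0 := (mul_eq_zero.mp hℓv).resolve_right (sub_ne_zero.mpr hw.symm)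
  rw [hv, this, zero_smul]

theorem ContinuousLinearMap.sum_apply_single_one_mul {ι R : Type*} [Fintype ι] [DecidableEq ι]
    [CommSemiring R] [TopologicalSpace R] (L : (ι → R) →L[R] R) (v : ι → R) :
    ∑ j, L (Pi.single j 1) * v j = L v := by
  conv_rhs => rw [← Finset.univ_sum_single v, map_sum]
  refine Finset.sum_congr rfl fun j _ => ?_
  rw [mul_comm, ← smul_eq_mul, ← map_smul, ← Pi.single_smul', smul_eq_mul, mul_one]

theorem sum_mul_pow_two_mul_nonneg {ι : Type*} (S : Finset ι) {a : ι → ℝ} (ha : ∀ i, 0 ≤ a i)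
    (m : ι → ℕ) (y : ι → ℝ) : 0 ≤ ∑ i ∈ S, a i * y i ^ (2 * m i) :=
  sum_nonneg fun i _ => mul_nonneg (ha i) ((even_two_mul _).pow_nonneg _)

section EulerIdentity

variable {ι : Type*} [Fintype ι]

theorem hasFDerivAt_sum_mul_pow (S : Finset ι) (a : ι → ℝ) (m : ι → ℕ) (y : ι → ℝ) :
    HasFDerivAt (fun z : ι → ℝ => ∑ i ∈ S, a i * z i ^ m i)
      (∑ i ∈ S, (a i * m i * y i ^ (m i - 1)) •
        (ContinuousLinearMap.proj i : (ι → ℝ) →L[ℝ] ℝ)) y := by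
  refine HasFDerivAt.fun_sum fun i _ => ?_
  have := ((hasDerivAt_pow (m i) (y i)).comp_hasFDerivAt y
    (hasFDerivAt_apply (𝕜 := ℝ) i y)).const_mul (a i)
  refine this.congr_fderiv ?_
  rw [smul_smul]
  ring_nf

theorem fderiv_sum_mul_pow_apply_weighted (S : Finset ι) (a : ι → ℝ) (m : ι → ℕ)
    {w : ι → ℝ} {d : ℝ} (hw : ∀ i ∈ S, w i * m i = d) (y : ι → ℝ) :
    fderiv ℝ (fun z : ι → ℝ => ∑ i ∈ S, a i * z i ^ m i) y (fun i => w i * y i) =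
      d * ∑ i ∈ S, a i * y i ^ m i := by
  rw [(hasFDerivAt_sum_mul_pow S a m y).fderiv, Finset.mul_sum]
  simp only [FunLike.coe_sum, Finset.sum_apply, smul_apply, ContinuousLinearMap.proj_apply,
    smul_eq_mul]
  refine Finset.sum_congr rfl fun i hi => ?_
  rw [← hw i hi]
  rcases Nat.eq_zero_or_pos (m i) with h0 | hpos
  · simp [h0]
  · calc a i * m i * y i ^ (m i - 1) * (w i * y i)
          = w i * m i * a i * (y i ^ (m i - 1) * y i) := by ring
      _ = w i * m i * (a i * y i ^ m i) := by rw [← pow_succ, Nat.sub_add_cancel hpos]; ring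

end EulerIdentity

section CompactifiedField

variable {n : ℕ} {α β : Fin n → ℕ} {a : Fin n → ℝ} {c : ℕ}

theorem kF_eq_rpow (hc : 0 < c) (ha : ∀ i, 0 ≤ a i) :
    kF α β a c = fun y =>
      (1 + ∑ i ∈ univ.filter (fun i => 0 < α i), a i * y i ^ (2 * β i)) ^ ((1 : ℝ) / (2 * c)) := by
  funext y
  unfold kF pF
  rw [← Real.rpow_natCast, ← Real.rpow_mul (sum_mul_pow_two_mul_nonneg _ ha β y)]
  push_cast
  rw [one_div_mul_cancel (by positivity), Real.rpow_one]

theorem kF_inv_mul_fderiv_kF_apply (hc : 0 < c) (hαβ : ∀ i, 0 < α i → α i * β i = c)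
    (ha : ∀ i, 0 ≤ a i) (y : Fin n → ℝ) :
    (kF α β a c y)⁻¹ * fderiv ℝ (kF α β a c) y (fun i => α i * y i) =
      (∑ i ∈ univ.filter (fun i => 0 < α i), a i * y i ^ (2 * β i)) /
        (1 + ∑ i ∈ univ.filter (fun i => 0 < α i), a i * y i ^ (2 * β i)) := by
  have hQ := sum_mul_pow_two_mul_nonneg (univ.filter (fun i => 0 < α i)) ha β y
  have hweight : ∀ i ∈ univ.filter (fun i => 0 < α i),
      (α i : ℝ) * (2 * β i : ℕ) = 2 * c := fun i hi => by
    rw [← hαβ i (mem_filter.mp hi).2]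
    push_cast
    ring
  have hderiv := (((hasFDerivAt_sum_mul_pow _ a (fun i => 2 * β i) y).differentiableAt
    |>.hasFDerivAt).const_add 1).rpow_const (p := (1 : ℝ) / (2 * c)) (Or.inl (by linarith))
  rw [kF_eq_rpow hc ha, hderiv.fderiv, smul_apply, smul_eq_mul,
    fderiv_sum_mul_pow_apply_weighted _ a _ hweight, Real.rpow_sub_one (by linarith)]
  field_simp

theorem compactified_field_eq_zero_iff (hc : 0 < c) (hαβ : ∀ i, 0 < α i → α i * β i = c)
    (ha : ∀ i, 0 ≤ a i) (y v : Fin n → ℝ) :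
    (fun i => v i - (kF α β a c y)⁻¹ *
        (∑ j, fderiv ℝ (kF α β a c) y (Pi.single j 1) * v j) * ((α i : ℝ) * y i)) = 0 ↔
      v = 0 := by
  let ℓ : (Fin n → ℝ) →ₗ[ℝ] ℝ := ((kF α β a c y)⁻¹ • fderiv ℝ (kF α β a c) y).toLinearMap
  have hℓ : ℓ (fun i => α i * y i) ≠ 1 := by
    have hQ := sum_mul_pow_two_mul_nonneg (univ.filter (fun i => 0 < α i)) ha β y
    simp only [ℓ, ContinuousLinearMap.coe_coe, smul_apply, smul_eq_mul,
      kF_inv_mul_fderiv_kF_apply hc hαβ ha]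
    exact ((div_lt_one (by linarith)).2 (by linarith)).ne
  convert sub_smul_eq_zero_iff_of_apply_ne_one ℓ hℓ v using 2
  ext i
  simp [ℓ, ContinuousLinearMap.sum_apply_single_one_mul, mul_assoc]

end CompactifiedField

theorem compactified_equilibria_correspondence_general
    {n : ℕ} (α β : Fin n → ℕ) (a : Fin n → ℝ) (c : ℕ)
    (hc : 0 < c)
    (hαβ : ∀ i, 0 < α i → α i * β i = c)
    (ha : ∀ i, 1 ≤ a i) :
    (∀ (y v : Fin n → ℝ),
      (fun i => v i - (kF α β a c y)⁻¹ *
          (∑ j, fderiv ℝ (kF α β a c) y (Pi.single j 1) * v j) * ((α i : ℝ) * y i))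
        = 0 ↔ v = 0) ∧
    (∀ (f : (Fin n → ℝ) → (Fin n → ℝ)) (y : Fin n → ℝ),
      f y = 0 ↔
      (fun i => f y i - (kF α β a c y)⁻¹ *
          (∑ j, fderiv ℝ (kF α β a c) y (Pi.single j 1) * f y j) * ((α i : ℝ) * y i))
        = 0) := by
  have ha₀ : ∀ i, 0 ≤ a i := fun i => zero_le_one.trans (ha i)
  exact ⟨compactified_field_eq_zero_iff hc hαβ ha₀,
    fun f y => (compactified_field_eq_zero_iff hc hαβ ha₀ y (f y)).symm⟩

/-- For every `y` and `v`, `v − κ(y)⁻¹ ⟨∇κ(y), v⟩ (α₁y₁,…,αₙyₙ) = 0 ↔ v = 0`.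
Consequently, `y` is an equilibrium of `y' = f(y)` iff the compactified vector
field `f(y) − κ(y)⁻¹⟨∇κ(y), f(y)⟩ (α₁y₁,…,αₙyₙ)` vanishes at `y`. -/
theorem compactified_equilibria_correspondence
    {n : ℕ} (hn : 1 ≤ n) (α β : Fin n → ℕ) (a : Fin n → ℝ) (c : ℕ)
    (hα : ∃ i, 0 < α i) (hc : 0 < c)
    (hαβ : ∀ i, 0 < α i → α i * β i = c)
    (hβ0 : ∀ i, α i = 0 → β i = 0)
    (ha : ∀ i, 1 ≤ a i) :
    (∀ (y v : Fin n → ℝ),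
      (fun i => v i - (kF α β a c y)⁻¹ *
          (∑ j, fderiv ℝ (kF α β a c) y (Pi.single j 1) * v j) * ((α i : ℝ) * y i))
        = 0 ↔ v = 0) ∧
    (∀ (f : (Fin n → ℝ) → (Fin n → ℝ)) (y : Fin n → ℝ),
      f y = 0 ↔
      (fun i => f y i - (kF α β a c y)⁻¹ *
          (∑ j, fderiv ℝ (kF α β a c) y (Pi.single j 1) * f y j) * ((α i : ℝ) * y i))
        = 0) :=
  compactified_equilibria_correspondence_general α β a c hc hαβ ha
end

section
/- Let f : ℝⁿ → ℝⁿ be any map and k ∈ ℤ, and let f̃ and g be defined from f as in the context. Then for every y ∈ ℝⁿ with x = T(y), the Fréchet derivative of T at y applied to the vector f(y) equals κ(y)^{k} · g(x); that is, the push-forward under T of the vector field f equals κ^{k} times the desingularized vector field g. -/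
open Finset

/-- `κ̂(x) = (1 − ∑_{i∈I} aᵢ xᵢ^{2βᵢ})^{−1/(2c)}`, i.e. `κ(T⁻¹(x))` for `x ∈ D`. -/
noncomputable def kHat {n : ℕ} (α β : Fin n → ℕ) (a : Fin n → ℝ) (c : ℕ)
    (x : Fin n → ℝ) : ℝ :=
  (1 - ∑ i ∈ univ.filter (fun i => 0 < α i), a i * x i ^ (2 * β i)) ^ (-(1 : ℝ) / (2 * (c : ℝ)))

/-- `f̃ⱼ(x) = κ̂(x)^{−(k+αⱼ)} fⱼ(κ̂(x)^{α₁}x₁,…,κ̂(x)^{αₙ}xₙ)`. -/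
noncomputable def fTil {n : ℕ} (α β : Fin n → ℕ) (a : Fin n → ℝ) (c : ℕ) (k : ℤ)
    (f : (Fin n → ℝ) → Fin n → ℝ) (x : Fin n → ℝ) (j : Fin n) : ℝ :=
  (kHat α β a c x) ^ (-(k + (α j : ℤ))) *
    f (fun i => (kHat α β a c x) ^ (α i) * x i) j

/-- `S(x) = ∑_{j∈I} βⱼ aⱼ xⱼ^{2βⱼ−1} f̃ⱼ(x)`. -/
noncomputable def SF {n : ℕ} (α β : Fin n → ℕ) (a : Fin n → ℝ) (c : ℕ) (k : ℤ)
    (f : (Fin n → ℝ) → Fin n → ℝ) (x : Fin n → ℝ) : ℝ :=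
  ∑ j ∈ univ.filter (fun i => 0 < α i),
    (β j : ℝ) * a j * x j ^ (2 * β j - 1) * fTil α β a c k f x j

/-- The desingularized vector field `gᵢ(x) = f̃ᵢ(x) − (αᵢ xᵢ / c) S(x)`. -/
noncomputable def gDesing {n : ℕ} (α β : Fin n → ℕ) (a : Fin n → ℝ) (c : ℕ) (k : ℤ)
    (f : (Fin n → ℝ) → Fin n → ℝ) (x : Fin n → ℝ) : Fin n → ℝ :=
  fun i => fTil α β a c k f x i - ((α i : ℝ) * x i / (c : ℝ)) * SF α β a c k f x


/-! Write `κ = kF y` and `x = T y`. Since `κ^{2c} = 1 + ∑_{i∈I} aᵢ yᵢ^{2βᵢ}`, the chain rule gives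
`dκ(v) = κ^{1-2c} S_y(v) / c` with `S_y(v) = ∑_{j∈I} βⱼ aⱼ yⱼ^{2βⱼ-1} vⱼ`, hence
`DT(y) v = κ^{-αᵢ} (vᵢ - αᵢ yᵢ κ^{-2c} S_y(v) / c)`. On the other side, `x` is the
quasi-homogeneous dilation of `y` by `κ⁻¹` (coordinate `i` scaled by `κ^{-αᵢ}`), and both
`∑ aᵢ yᵢ^{2βᵢ}` and `S` are quasi-homogeneous of degree `2c` because `αᵢβᵢ = c`. This yields
`κ̂(x) = κ`, `f̃(x) = κ^{-k} κ^{-α} f(y)` and `S(x) = κ^{-k-2c} S_y(f y)`, and the two sides agree. -/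

namespace QuasiPoincare

variable {n : ℕ} (α β : Fin n → ℕ) (a : Fin n → ℝ) (c : ℕ)

noncomputable def quasiSum (y : Fin n → ℝ) : ℝ :=
  ∑ i ∈ univ.filter (fun i => 0 < α i), a i * y i ^ (2 * β i)

noncomputable def SLin (x : Fin n → ℝ) : (Fin n → ℝ) →L[ℝ] ℝ :=
  ∑ j ∈ univ.filter (fun i => 0 < α i),
    ((β j : ℝ) * a j * x j ^ (2 * β j - 1)) • ContinuousLinearMap.proj j

def quasiDilation (t : ℝ) (y : Fin n → ℝ) : Fin n → ℝ := fun i => t ^ α i * y i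

variable {α β a c}

lemma SLin_apply (x v : Fin n → ℝ) :
    SLin α β a x v = ∑ j ∈ univ.filter (fun i => 0 < α i),
      (β j : ℝ) * a j * x j ^ (2 * β j - 1) * v j := by
  simp [SLin]

lemma SF_eq_SLin (k : ℤ) (f : (Fin n → ℝ) → Fin n → ℝ) (x : Fin n → ℝ) :
    SF α β a c k f x = SLin α β a x (fTil α β a c k f x) := by
  rw [SLin_apply, SF]

lemma quasiSum_nonneg (ha : ∀ i, 0 ≤ a i) (y : Fin n → ℝ) : 0 ≤ quasiSum α β a y :=
  sum_nonneg fun i _ => mul_nonneg (ha i) (by rw [pow_mul]; positivity)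

lemma one_add_quasiSum_pos (ha : ∀ i, 0 ≤ a i) (y : Fin n → ℝ) :
    0 < 1 + quasiSum α β a y := by
  linarith [quasiSum_nonneg (α := α) (β := β) ha y]

lemma two_mul_natCast_ne_zero (hc : c ≠ 0) : (2 * (c : ℝ)) ≠ 0 :=
  mul_ne_zero two_ne_zero (Nat.cast_ne_zero.mpr hc)

lemma kF_eq_rpow (hc : c ≠ 0) (ha : ∀ i, 0 ≤ a i) (y : Fin n → ℝ) :
    kF α β a c y = (1 + quasiSum α β a y) ^ ((1 : ℝ) / (2 * (c : ℝ))) := by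
  have hpF : pF α β a c y ^ (2 * c) = quasiSum α β a y := by
    change (quasiSum α β a y ^ _) ^ _ = _
    rw [← Real.rpow_natCast, ← Real.rpow_mul (quasiSum_nonneg ha y), Nat.cast_mul,
      Nat.cast_ofNat, one_div_mul_cancel (two_mul_natCast_ne_zero hc), Real.rpow_one]
  rw [kF, hpF]

lemma kF_pos (hc : c ≠ 0) (ha : ∀ i, 0 ≤ a i) (y : Fin n → ℝ) : 0 < kF α β a c y := by
  rw [kF_eq_rpow hc ha]
  exact Real.rpow_pos_of_pos (one_add_quasiSum_pos ha y) _

lemma kF_pow (hc : c ≠ 0) (ha : ∀ i, 0 ≤ a i) (y : Fin n → ℝ) :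
    kF α β a c y ^ (2 * c) = 1 + quasiSum α β a y := by
  rw [kF_eq_rpow hc ha, ← Real.rpow_natCast, ← Real.rpow_mul (one_add_quasiSum_pos ha y).le,
    Nat.cast_mul, Nat.cast_ofNat, one_div_mul_cancel (two_mul_natCast_ne_zero hc), Real.rpow_one]

lemma hasFDerivAt_quasiSum (y : Fin n → ℝ) :
    HasFDerivAt (quasiSum α β a) ((2 : ℝ) • SLin α β a y) y := by
  have hterm : ∀ j, HasFDerivAt (fun z : Fin n → ℝ => a j * z j ^ (2 * β j))
      (a j • ((((2 * β j : ℕ) : ℝ) * y j ^ (2 * β j - 1)) • ContinuousLinearMap.proj j)) y :=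
    fun j => ((hasDerivAt_pow (2 * β j) (y j)).comp_hasFDerivAt y
      (hasFDerivAt_apply (𝕜 := ℝ) j y)).const_mul (a j)
  refine (HasFDerivAt.fun_sum (u := univ.filter (fun i => 0 < α i))
    fun j _ => hterm j).congr_fderiv ?_
  ext v
  simp only [Nat.cast_mul, Nat.cast_ofNat, _root_.sum_apply, smul_apply,
    ContinuousLinearMap.proj_apply, smul_eq_mul, SLin_apply, mul_sum]
  refine sum_congr rfl fun j _ => ?_
  ring

lemma hasFDerivAt_kF (hc : c ≠ 0) (ha : ∀ i, 0 ≤ a i) (y : Fin n → ℝ) :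
    HasFDerivAt (kF α β a c)
      ((kF α β a c y / (c * kF α β a c y ^ (2 * c))) • SLin α β a y) y := by
  have hQ := one_add_quasiSum_pos (α := α) (β := β) ha y
  have hrpow := ((hasFDerivAt_quasiSum (α := α) (β := β) (a := a) y).const_add 1).rpow_const
    (p := (1 : ℝ) / (2 * (c : ℝ))) (Or.inl hQ.ne')
  refine (hrpow.congr_of_eventuallyEq (.of_forall (kF_eq_rpow hc ha))).congr_fderiv ?_
  rw [smul_smul, kF_pow hc ha, kF_eq_rpow hc ha, Real.rpow_sub hQ, Real.rpow_one]
  congr 1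
  field_simp

lemma hasFDerivAt_TqP (hc : c ≠ 0) (ha : ∀ i, 0 ≤ a i) (y : Fin n → ℝ) :
    HasFDerivAt (TqP α β a c) (ContinuousLinearMap.pi fun i => (kF α β a c y)⁻¹ ^ α i •
      (ContinuousLinearMap.proj i -
        (α i * y i / (c * kF α β a c y ^ (2 * c))) • SLin α β a y)) y := by
  set κ := kF α β a c y
  have hκ : κ ≠ 0 := (kF_pos hc ha y).ne'
  refine hasFDerivAt_pi.mpr fun i => ?_
  have hinv := ((hasDerivAt_inv hκ).comp_hasFDerivAt y (hasFDerivAt_kF hc ha y)).pow (α i)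
  refine ((hasFDerivAt_apply (𝕜 := ℝ) i y).mul hinv).congr_of_eventuallyEq ?_ |>.congr_fderiv ?_
  · exact .of_forall fun z => by simp [TqP, div_eq_mul_inv]
  have hpow : (α i : ℝ) * κ⁻¹ ^ (α i - 1) * κ⁻¹ = α i * κ⁻¹ ^ α i := by
    rcases Nat.eq_zero_or_pos (α i) with h | h
    · simp [h]
    · rw [mul_assoc, pow_sub_one_mul h.ne']
  have hsq : (κ ^ 2)⁻¹ * κ = κ⁻¹ := by field_simp
  ext v
  simp only [Function.comp_apply, add_apply, sub_apply, smul_apply,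
    ContinuousLinearMap.proj_apply, smul_eq_mul, nsmul_eq_mul]
  linear_combination (-(y i) * SLin α β a y v / (c * κ ^ (2 * c))) * hpow +
    (-(y i) * α i * κ⁻¹ ^ (α i - 1) * SLin α β a y v / (c * κ ^ (2 * c))) * hsq

lemma quasiDilation_quasiDilation (s t : ℝ) (y : Fin n → ℝ) :
    quasiDilation α s (quasiDilation α t y) = quasiDilation α (s * t) y := by
  ext i
  simp only [quasiDilation, mul_pow]
  ring

lemma quasiDilation_one (y : Fin n → ℝ) : quasiDilation α 1 y = y := by
  ext i
  simp [quasiDilation]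

lemma TqP_eq_quasiDilation (y : Fin n → ℝ) :
    TqP α β a c y = quasiDilation α (kF α β a c y)⁻¹ y := by
  ext i
  simp only [TqP, quasiDilation, inv_pow, div_eq_inv_mul]

lemma quasiSum_quasiDilation (hαβ : ∀ i, 0 < α i → α i * β i = c) (t : ℝ) (y : Fin n → ℝ) :
    quasiSum α β a (quasiDilation α t y) = t ^ (2 * c) * quasiSum α β a y := by
  rw [quasiSum, quasiSum, mul_sum]
  refine sum_congr rfl fun j hj => ?_
  rw [quasiDilation, mul_pow, ← pow_mul, Nat.mul_left_comm, hαβ j (mem_filter.mp hj).2,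
    mul_left_comm]

lemma SLin_quasiDilation (hc : c ≠ 0) (hαβ : ∀ i, 0 < α i → α i * β i = c) (t : ℝ)
    (x v : Fin n → ℝ) :
    SLin α β a (quasiDilation α t x) (quasiDilation α t v) = t ^ (2 * c) * SLin α β a x v := by
  rw [SLin_apply, SLin_apply, mul_sum]
  refine sum_congr rfl fun j hj => ?_
  have hjc := hαβ j (mem_filter.mp hj).2
  have hβ : β j ≠ 0 := by
    rintro h
    simp [h] at hjc
    exact hc hjc.symm
  have hexp : α j * (2 * β j - 1) + α j = 2 * c := by
    rw [← Nat.mul_succ, Nat.succ_eq_add_one, Nat.sub_add_cancel (by omega), Nat.mul_left_comm,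
      hjc]
  simp only [quasiDilation, mul_pow, ← pow_mul]
  rw [← hexp, pow_add]
  ring

lemma kHat_TqP (hc : c ≠ 0) (ha : ∀ i, 0 ≤ a i) (hαβ : ∀ i, 0 < α i → α i * β i = c)
    (y : Fin n → ℝ) : kHat α β a c (TqP α β a c y) = kF α β a c y := by
  have hQ := one_add_quasiSum_pos (α := α) (β := β) ha y
  have hsum : 1 - quasiSum α β a (TqP α β a c y) = (1 + quasiSum α β a y)⁻¹ := by
    rw [TqP_eq_quasiDilation, quasiSum_quasiDilation hαβ, inv_pow, kF_pow hc ha]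
    field_simp
    ring
  change (1 - quasiSum α β a (TqP α β a c y)) ^ _ = _
  rw [hsum, kF_eq_rpow hc ha, Real.inv_rpow hQ.le, ← Real.rpow_neg hQ.le, neg_div, neg_neg]

lemma fTil_TqP (hc : c ≠ 0) (ha : ∀ i, 0 ≤ a i) (hαβ : ∀ i, 0 < α i → α i * β i = c)
    (k : ℤ) (f : (Fin n → ℝ) → Fin n → ℝ) (y : Fin n → ℝ) :
    fTil α β a c k f (TqP α β a c y) =
      (kF α β a c y ^ k)⁻¹ • quasiDilation α (kF α β a c y)⁻¹ (f y) := by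
  have hκ := (kF_pos (α := α) (β := β) hc ha y).ne'
  have harg : quasiDilation α (kF α β a c y) (TqP α β a c y) = y := by
    rw [TqP_eq_quasiDilation, quasiDilation_quasiDilation, mul_inv_cancel₀ hκ,
      quasiDilation_one]
  ext j
  change kHat α β a c _ ^ _ * f (quasiDilation α (kHat α β a c _) _) j = _
  rw [kHat_TqP hc ha hαβ, harg, neg_add, zpow_add₀ hκ, zpow_neg, zpow_neg, zpow_natCast]
  simp only [quasiDilation, Pi.smul_apply, smul_eq_mul, inv_pow]
  ring

lemma gDesing_TqP (hc : c ≠ 0) (ha : ∀ i, 0 ≤ a i) (hαβ : ∀ i, 0 < α i → α i * β i = c)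
    (k : ℤ) (f : (Fin n → ℝ) → Fin n → ℝ) (y : Fin n → ℝ) :
    gDesing α β a c k f (TqP α β a c y) = fun i => (kF α β a c y ^ k)⁻¹ *
      ((kF α β a c y)⁻¹ ^ α i *
        (f y i - α i * y i / (c * kF α β a c y ^ (2 * c)) * SLin α β a y (f y))) := by
  ext i
  rw [gDesing, SF_eq_SLin, fTil_TqP hc ha hαβ, map_smul, TqP_eq_quasiDilation,
    SLin_quasiDilation hc hαβ]
  simp only [quasiDilation, Pi.smul_apply, smul_eq_mul, inv_pow]
  ring

end QuasiPoincare

theorem pushforward_eq_kappa_pow_mul_desing_general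
    {n : ℕ} (α β : Fin n → ℕ) (a : Fin n → ℝ) (c : ℕ)
    (hc : 0 < c)
    (hαβ : ∀ i, 0 < α i → α i * β i = c)
    (ha : ∀ i, 1 ≤ a i)
    (k : ℤ) (f : (Fin n → ℝ) → Fin n → ℝ) (y : Fin n → ℝ) :
    fderiv ℝ (TqP α β a c) y (f y) =
      fun i => (kF α β a c y) ^ k * gDesing α β a c k f (TqP α β a c y) i := by
  have ha₀ : ∀ i, 0 ≤ a i := fun i => zero_le_one.trans (ha i)
  have hκk : kF α β a c y ^ k ≠ 0 := zpow_ne_zero k (QuasiPoincare.kF_pos hc.ne' ha₀ y).ne'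
  rw [(QuasiPoincare.hasFDerivAt_TqP hc.ne' ha₀ y).fderiv,
    QuasiPoincare.gDesing_TqP hc.ne' ha₀ hαβ]
  ext i
  rw [← mul_assoc, mul_inv_cancel₀ hκk, one_mul]
  simp [sub_apply]

/-- The push-forward under `T` of the vector field `f` equals `κᵏ` times the
desingularized vector field `g`: `DT(y) f(y) = κ(y)ᵏ g(T(y))`. -/
theorem pushforward_eq_kappa_pow_mul_desing
    {n : ℕ} (hn : 1 ≤ n) (α β : Fin n → ℕ) (a : Fin n → ℝ) (c : ℕ)
    (hα : ∃ i, 0 < α i) (hc : 0 < c)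
    (hαβ : ∀ i, 0 < α i → α i * β i = c)
    (hβ0 : ∀ i, α i = 0 → β i = 0)
    (ha : ∀ i, 1 ≤ a i)
    (k : ℤ) (f : (Fin n → ℝ) → Fin n → ℝ) (y : Fin n → ℝ) :
    fderiv ℝ (TqP α β a c) y (f y) =
      fun i => (kF α β a c y) ^ k * gDesing α β a c k f (TqP α β a c y) i :=
  pushforward_eq_kappa_pow_mul_desing_general α β a c hc hαβ ha k f y
end

section
/- Let f : ℝⁿ → ℝⁿ, k ∈ ℤ, and let f̃, S, g be defined from f as in the context. If J ⊆ ℝ is an interval and x : J → D is differentiable with x'(τ) = g(x(τ)) for all τ ∈ J, then for all τ ∈ J the quantity 1 − p(x(τ))^{2c} satisfies the differential equation d/dτ [1 − p(x(τ))^{2c}] = −2 S(x(τ)) (1 − p(x(τ))^{2c}). -/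
open Finset

/-! As the weights `aᵢ` are nonnegative, `p(y)^{2c}` is just the weighted sum
`Q(y) = ∑_{i∈I} aᵢ yᵢ^{2βᵢ}`, so it suffices to differentiate `Q` along `x' = g(x)`.
Since `αᵢβᵢ = c`, the radial correction `−(αᵢ xᵢ / c) S` of `gᵢ` contributes
`−2 S aᵢ xᵢ^{2βᵢ}` to `d/dτ (aᵢ xᵢ^{2βᵢ})`, while the `f̃ᵢ` parts add up to `2 S`;
hence `dQ/dτ = 2 S (1 − Q)`. -/

theorem pF_pow_two_mul {n : ℕ} (α β : Fin n → ℕ) {a : Fin n → ℝ} {c : ℕ}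
    (ha : ∀ i, 0 ≤ a i) (hc : c ≠ 0) (y : Fin n → ℝ) :
    pF α β a c y ^ (2 * c) = ∑ i ∈ univ.filter (fun i => 0 < α i), a i * y i ^ (2 * β i) := by
  have hQ : 0 ≤ ∑ i ∈ univ.filter (fun i => 0 < α i), a i * y i ^ (2 * β i) :=
    sum_nonneg fun i _ => mul_nonneg (ha i) ((even_two_mul (β i)).pow_nonneg _)
  have hexp : (1 : ℝ) / (2 * (c : ℝ)) = ((2 * c : ℕ) : ℝ)⁻¹ := by push_cast; rw [one_div]
  rw [pF, hexp, Real.rpow_inv_natCast_pow hQ (by positivity)]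

theorem HasDerivWithinAt.sum_mul_pow {ι : Type*} [Fintype ι] {x : ℝ → ι → ℝ} {x' : ι → ℝ}
    {J : Set ℝ} {t : ℝ} (hx : HasDerivWithinAt x x' J t) (s : Finset ι) (a : ι → ℝ)
    (m : ι → ℕ) :
    HasDerivWithinAt (fun σ => ∑ i ∈ s, a i * x σ i ^ m i)
      (∑ i ∈ s, a i * (m i * x t i ^ (m i - 1) * x' i)) J t :=
  HasDerivWithinAt.fun_sum fun i _ => ((hasDerivWithinAt_pi.mp hx i).pow (m i)).const_mul (a i)

theorem mul_gDesing_of_mul_eq {n : ℕ} {α β : Fin n → ℕ} (a : Fin n → ℝ) {c : ℕ} (k : ℤ)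
    (f : (Fin n → ℝ) → Fin n → ℝ) (y : Fin n → ℝ) {i : Fin n} (hc : c ≠ 0)
    (hαβ : α i * β i = c) :
    a i * ((2 * β i : ℕ) * y i ^ (2 * β i - 1) * gDesing α β a c k f y i) =
      2 * ((β i : ℝ) * a i * y i ^ (2 * β i - 1) * fTil α β a c k f y i) -
        2 * SF α β a c k f y * (a i * y i ^ (2 * β i)) := by
  obtain ⟨hα, hβ⟩ := mul_ne_zero_iff.mp (hαβ ▸ hc : α i * β i ≠ 0)
  have hpow : y i ^ (2 * β i) = y i ^ (2 * β i - 1) * y i :=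
    (pow_sub_one_mul (by positivity) _).symm
  have hαβ' : (α i : ℝ) * β i = c := by exact_mod_cast hαβ
  have hα' : (α i : ℝ) ≠ 0 := by exact_mod_cast hα
  rw [gDesing, hpow, ← hαβ']
  push_cast
  field_simp

theorem sum_mul_gDesing {n : ℕ} {α β : Fin n → ℕ} (a : Fin n → ℝ) {c : ℕ} (k : ℤ)
    (f : (Fin n → ℝ) → Fin n → ℝ) (hc : c ≠ 0) (hαβ : ∀ i, 0 < α i → α i * β i = c)
    (y : Fin n → ℝ) :
    ∑ i ∈ univ.filter (fun i => 0 < α i),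
        a i * ((2 * β i : ℕ) * y i ^ (2 * β i - 1) * gDesing α β a c k f y i) =
      2 * SF α β a c k f y * (1 - ∑ i ∈ univ.filter (fun i => 0 < α i), a i * y i ^ (2 * β i)) := by
  rw [sum_congr rfl fun i hi => mul_gDesing_of_mul_eq a k f y hc (hαβ i (mem_filter.mp hi).2),
    sum_sub_distrib, ← mul_sum, ← mul_sum, SF]
  ring

theorem radial_quantity_ode_general
    {n : ℕ} (α β : Fin n → ℕ) (a : Fin n → ℝ) (c : ℕ)
    (hc : 0 < c)
    (hαβ : ∀ i, 0 < α i → α i * β i = c)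
    (ha : ∀ i, 1 ≤ a i)
    (k : ℤ) (f : (Fin n → ℝ) → Fin n → ℝ)
    (J : Set ℝ)
    (x : ℝ → Fin n → ℝ)
    (hx : ∀ τ ∈ J, HasDerivWithinAt x (gDesing α β a c k f (x τ)) J τ) :
    ∀ τ ∈ J, HasDerivWithinAt (fun σ => 1 - pF α β a c (x σ) ^ (2 * c))
      (-2 * SF α β a c k f (x τ) * (1 - pF α β a c (x τ) ^ (2 * c))) J τ := by
  intro τ hτ
  simp only [pF_pow_two_mul α β (fun i => zero_le_one.trans (ha i)) hc.ne']
  refine (((hx τ hτ).sum_mul_pow (univ.filter fun i => 0 < α i) a (2 * β ·)).const_sub 1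
    ).congr_deriv ?_
  rw [sum_mul_gDesing a k f hc.ne' hαβ]
  ring

/-- Along any solution `x : J → D` of the desingularized system `x' = g(x)`,
the quantity `1 − p(x(τ))^{2c}` satisfies
`d/dτ [1 − p(x(τ))^{2c}] = −2 S(x(τ)) (1 − p(x(τ))^{2c})`. -/
theorem radial_quantity_ode
    {n : ℕ} (hn : 1 ≤ n) (α β : Fin n → ℕ) (a : Fin n → ℝ) (c : ℕ)
    (hα : ∃ i, 0 < α i) (hc : 0 < c)
    (hαβ : ∀ i, 0 < α i → α i * β i = c)
    (hβ0 : ∀ i, α i = 0 → β i = 0)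
    (ha : ∀ i, 1 ≤ a i)
    (k : ℤ) (f : (Fin n → ℝ) → Fin n → ℝ)
    (J : Set ℝ) (hJ : J.OrdConnected)
    (x : ℝ → Fin n → ℝ)
    (hxD : ∀ τ ∈ J, pF α β a c (x τ) < 1)
    (hx : ∀ τ ∈ J, HasDerivWithinAt x (gDesing α β a c k f (x τ)) J τ) :
    ∀ τ ∈ J, HasDerivWithinAt (fun σ => 1 - pF α β a c (x σ) ^ (2 * c))
      (-2 * SF α β a c k f (x τ) * (1 - pF α β a c (x τ) ^ (2 * c))) J τ :=
  radial_quantity_ode_general α β a c hc hαβ ha k f J x hx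
end

section
/- Suppose each fⱼ : ℝⁿ → ℝ is continuous and quasi-homogeneous of type α and order k+αⱼ, and define S(x) = ∑_{j∈I} βⱼ aⱼ xⱼ^{2βⱼ−1} fⱼ(x) and g : ℝⁿ → ℝⁿ by gᵢ(x) = fᵢ(x) − (αᵢ xᵢ / c) · S(x). If J ⊆ ℝ is an interval, x : J → ℝⁿ is differentiable with x'(τ) = g(x(τ)) for all τ ∈ J, and p(x(τ₀)) = 1 for some τ₀ ∈ J, then p(x(τ)) = 1 for all τ ∈ J; i.e., the horizon E = {p(x) = 1} is invariant under the desingularized flow. -/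
open Finset

/-- For a quasi-homogeneous `f`, the desingularized vector field
`gᵢ(x) = fᵢ(x) − (αᵢ xᵢ / c) S(x)` with `S(x) = ∑_{j∈I} βⱼaⱼ xⱼ^{2βⱼ−1} fⱼ(x)`. -/
noncomputable def gQH {n : ℕ} (α β : Fin n → ℕ) (a : Fin n → ℝ) (c : ℕ)
    (f : Fin n → (Fin n → ℝ) → ℝ) (x : Fin n → ℝ) : Fin n → ℝ :=
  fun i => f i x - ((α i : ℝ) * x i / (c : ℝ)) *
    ∑ j ∈ univ.filter (fun l => 0 < α l),
      (β j : ℝ) * a j * x j ^ (2 * β j - 1) * f j x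

/-!
Write `Q = p ^ (2c) = ∑_{i∈I} aᵢ yᵢ^{2βᵢ}`. Since `αᵢ βᵢ = c`, the radial correction
`-(αᵢ xᵢ / c) S` in `g` changes `Q` at the rate `-2 S Q`, while the `fᵢ` part contributes `2 S`.
Hence along a solution `(Q - 1)' = -2 S (Q - 1)`: the function `Q ∘ x - 1` solves a scalar linear
ODE with continuous coefficient, vanishes at `τ₀`, and so vanishes on all of `J` by uniqueness of
solutions of Lipschitz ODEs.
-/

section LinearODE

variable {h V : ℝ → ℝ} {J : Set ℝ}

lemma exists_lipschitzWith_mul_of_continuousOn {s : Set ℝ} (hs : IsCompact s)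
    (hh : ContinuousOn h s) : ∃ K : NNReal, ∀ t ∈ s, LipschitzWith K (h t * ·) := by
  obtain ⟨C, hC⟩ := hs.exists_bound_of_continuousOn hh
  refine ⟨C.toNNReal, fun t ht => (lipschitzWith_smul (h t)).weaken ?_⟩
  rw [← NNReal.coe_le_coe, coe_nnnorm, Real.coe_toNNReal']
  exact (hC t ht).trans (le_max_left _ _)

theorem Set.OrdConnected.eqOn_zero_of_hasDerivWithinAt_mul_self (hJ : J.OrdConnected)
    (hh : ContinuousOn h J) (hV : ∀ t ∈ J, HasDerivWithinAt V (h t * V t) J t)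
    {t₀ : ℝ} (ht₀ : t₀ ∈ J) (hV₀ : V t₀ = 0) : Set.EqOn V 0 J := by
  have hVc : ContinuousOn V J := fun t ht => (hV t ht).continuousWithinAt
  have hzero : ∀ s (u : Set ℝ), HasDerivWithinAt (0 : ℝ → ℝ) (h s * 0) u s := fun s u => by
    simpa using hasDerivWithinAt_zero (𝕜 := ℝ) (F := ℝ) (x := s) (s := u)
  intro t ht
  rcases le_total t₀ t with hle | hle
  · have hsub := hJ.out ht₀ ht
    obtain ⟨K, hK⟩ := exists_lipschitzWith_mul_of_continuousOn isCompact_Icc (hh.mono hsub)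
    have hsJ : ∀ s ∈ Set.Ico t₀ t, s ∈ J := fun s hs => hsub (Set.Ico_subset_Icc_self hs)
    exact ODE_solution_unique_of_mem_Icc_right (v := fun s y => h s * y) (s := fun _ => Set.univ)
      (fun s hs => (hK s (Set.Ico_subset_Icc_self hs)).lipschitzOnWith) (hVc.mono hsub)
      (fun s hs => (hV s (hsJ s hs)).mono_of_mem_nhdsWithin (hJ.mem_nhdsGE (hsJ s hs) ht hs.2))
      (fun _ _ => Set.mem_univ _) continuousOn_const (fun s _ => hzero s _)
      (fun _ _ => Set.mem_univ _) hV₀ ⟨hle, le_rfl⟩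
  · have hsub := hJ.out ht ht₀
    obtain ⟨K, hK⟩ := exists_lipschitzWith_mul_of_continuousOn isCompact_Icc (hh.mono hsub)
    have hsJ : ∀ s ∈ Set.Ioc t t₀, s ∈ J := fun s hs => hsub (Set.Ioc_subset_Icc_self hs)
    exact ODE_solution_unique_of_mem_Icc_left (v := fun s y => h s * y) (s := fun _ => Set.univ)
      (fun s hs => (hK s (Set.Ioc_subset_Icc_self hs)).lipschitzOnWith) (hVc.mono hsub)
      (fun s hs => (hV s (hsJ s hs)).mono_of_mem_nhdsWithin (hJ.mem_nhdsLE ht (hsJ s hs) hs.1))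
      (fun _ _ => Set.mem_univ _) continuousOn_const (fun s _ => hzero s _)
      (fun _ _ => Set.mem_univ _) hV₀ ⟨le_rfl, hle⟩

end LinearODE

section Horizon

variable {n : ℕ} (α β : Fin n → ℕ) (a : Fin n → ℝ) (c : ℕ) (f : Fin n → (Fin n → ℝ) → ℝ)

noncomputable def qF (y : Fin n → ℝ) : ℝ :=
  ∑ i ∈ univ.filter (fun i => 0 < α i), a i * y i ^ (2 * β i)

noncomputable def sF (y : Fin n → ℝ) : ℝ :=
  ∑ j ∈ univ.filter (fun l => 0 < α l), (β j : ℝ) * a j * y j ^ (2 * β j - 1) * f j y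

lemma gQH_apply (y : Fin n → ℝ) (i : Fin n) :
    gQH α β a c f y i = f i y - (α i : ℝ) * y i / c * sF α β a f y := rfl

lemma pF_eq_rpow (y : Fin n → ℝ) : pF α β a c y = qF α β a y ^ (2 * (c : ℝ))⁻¹ := by
  rw [pF, one_div, qF]

lemma HasDerivWithinAt.qF_comp {x : ℝ → Fin n → ℝ} {x' : Fin n → ℝ} {s : Set ℝ} {τ : ℝ}
    (hx : HasDerivWithinAt x x' s τ) :
    HasDerivWithinAt (fun t => qF α β a (x t))
      (∑ i ∈ univ.filter (fun i => 0 < α i),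
        a i * (((2 * β i : ℕ) : ℝ) * x τ i ^ (2 * β i - 1) * x' i)) s τ :=
  .fun_sum fun i _ => ((hasDerivWithinAt_pi.mp hx i).fun_pow _).const_mul _

variable {α β a c f}

lemma qF_nonneg (ha : ∀ i, 0 ≤ a i) (y : Fin n → ℝ) : 0 ≤ qF α β a y :=
  sum_nonneg fun i _ => mul_nonneg (ha i) (by rw [pow_mul]; positivity)

lemma pF_eq_one_iff (hc : c ≠ 0) (ha : ∀ i, 0 ≤ a i) (y : Fin n → ℝ) :
    pF α β a c y = 1 ↔ qF α β a y = 1 := by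
  rw [pF_eq_rpow, Real.rpow_inv_eq (qF_nonneg ha y) zero_le_one (by positivity), Real.one_rpow]

lemma continuous_sF (hf : ∀ j, Continuous (f j)) : Continuous (sF α β a f) :=
  continuous_finsetSum _ fun j _ => (continuous_const.mul ((continuous_apply j).pow _)).mul (hf j)

lemma sum_deriv_qF_gQH (hc : c ≠ 0) (hαβ : ∀ i, 0 < α i → α i * β i = c) (y : Fin n → ℝ) :
    ∑ i ∈ univ.filter (fun i => 0 < α i),
        a i * (((2 * β i : ℕ) : ℝ) * y i ^ (2 * β i - 1) * gQH α β a c f y i) =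
      2 * sF α β a f y * (1 - qF α β a y) := calc
  _ = ∑ i ∈ univ.filter (fun i => 0 < α i), (2 * ((β i : ℝ) * a i * y i ^ (2 * β i - 1) * f i y)
        - 2 * sF α β a f y * (a i * y i ^ (2 * β i))) := by
    refine sum_congr rfl fun i hi => ?_
    have hαβi := hαβ i (mem_filter.mp hi).2
    have hβ : β i ≠ 0 := right_ne_zero_of_mul (hαβi ▸ hc)
    have hpow : y i ^ (2 * β i) = y i ^ (2 * β i - 1) * y i := by
      rw [← pow_succ]; congr 1; omega
    have hα : (α i : ℝ) ≠ 0 := by exact_mod_cast (mem_filter.mp hi).2.ne'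
    rw [gQH_apply, hpow, ← hαβi]
    push_cast
    field_simp
  _ = 2 * sF α β a f y * (1 - qF α β a y) := by
    rw [sum_sub_distrib, ← mul_sum, ← mul_sum, mul_one_sub]
    rfl

lemma HasDerivWithinAt.qF_comp_sub_one_of_gQH (hc : c ≠ 0)
    (hαβ : ∀ i, 0 < α i → α i * β i = c) {x : ℝ → Fin n → ℝ} {s : Set ℝ} {τ : ℝ}
    (hx : HasDerivWithinAt x (gQH α β a c f (x τ)) s τ) :
    HasDerivWithinAt (fun t => qF α β a (x t) - 1)
      (-2 * sF α β a f (x τ) * (qF α β a (x τ) - 1)) s τ :=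
  ((hx.qF_comp α β a).sub_const 1).congr_deriv <| by
    rw [sum_deriv_qF_gQH hc hαβ]
    ring

end Horizon

theorem horizon_invariant_general
    {n : ℕ} (α β : Fin n → ℕ) (a : Fin n → ℝ) (c : ℕ)
    (hc : 0 < c)
    (hαβ : ∀ i, 0 < α i → α i * β i = c)
    (ha : ∀ i, 1 ≤ a i)
    (f : Fin n → (Fin n → ℝ) → ℝ)
    (hfc : ∀ j, Continuous (f j))
    (J : Set ℝ) (hJ : J.OrdConnected)
    (x : ℝ → Fin n → ℝ)
    (hx : ∀ τ ∈ J, HasDerivWithinAt x (gQH α β a c f (x τ)) J τ)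
    (τ₀ : ℝ) (hτ₀ : τ₀ ∈ J) (hp : pF α β a c (x τ₀) = 1) :
    ∀ τ ∈ J, pF α β a c (x τ) = 1 := by
  have ha₀ : ∀ i, 0 ≤ a i := fun i => zero_le_one.trans (ha i)
  have hx_cont : ContinuousOn x J := fun τ hτ => (hx τ hτ).continuousWithinAt
  have hQ_eq : Set.EqOn (fun t => qF α β a (x t) - 1) 0 J :=
    hJ.eqOn_zero_of_hasDerivWithinAt_mul_self
      (continuousOn_const.mul ((continuous_sF hfc).comp_continuousOn hx_cont))
      (fun τ hτ => (hx τ hτ).qF_comp_sub_one_of_gQH hc.ne' hαβ) hτ₀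
      (sub_eq_zero.mpr ((pF_eq_one_iff hc.ne' ha₀ _).mp hp))
  intro τ hτ
  exact (pF_eq_one_iff hc.ne' ha₀ _).mpr (sub_eq_zero.mp (hQ_eq hτ))

/-- The horizon `E = {p(x) = 1}` is invariant under the desingularized flow:
if each `fⱼ` is continuous and quasi-homogeneous of type `α` and order `k+αⱼ`,
`x : J → ℝⁿ` solves `x' = g(x)` on an interval `J`, and `p(x(τ₀)) = 1` for some
`τ₀ ∈ J`, then `p(x(τ)) = 1` for all `τ ∈ J`. -/
theorem horizon_invariant
    {n : ℕ} (hn : 1 ≤ n) (α β : Fin n → ℕ) (a : Fin n → ℝ) (c : ℕ)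
    (hα : ∃ i, 0 < α i) (hc : 0 < c)
    (hαβ : ∀ i, 0 < α i → α i * β i = c)
    (hβ0 : ∀ i, α i = 0 → β i = 0)
    (ha : ∀ i, 1 ≤ a i)
    (k : ℕ) (hk : 1 ≤ k)
    (f : Fin n → (Fin n → ℝ) → ℝ)
    (hfc : ∀ j, Continuous (f j))
    (hfqh : ∀ (j : Fin n) (x : Fin n → ℝ) (R : ℝ),
      f j (fun i => R ^ (α i) * x i) = R ^ (k + α j) * f j x)
    (J : Set ℝ) (hJ : J.OrdConnected)
    (x : ℝ → Fin n → ℝ)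
    (hx : ∀ τ ∈ J, HasDerivWithinAt x (gQH α β a c f (x τ)) J τ)
    (τ₀ : ℝ) (hτ₀ : τ₀ ∈ J) (hp : pF α β a c (x τ₀) = 1) :
    ∀ τ ∈ J, pF α β a c (x τ) = 1 :=
  horizon_invariant_general α β a c hc hαβ ha f hfc J hJ x hx τ₀ hτ₀ hp
end

section
/- Fix an integer n ≥ 1, ε ∈ ℝ with ε ≠ 0, and real numbers a₀,…,a_{2n} and b₀,…,b_{n−1}. The Liénard vector field f : ℝ² → ℝ², f(x,y) = ( y, −(ε x^{2n+1} + ∑_{k=0}^{2n} aₖ xᵏ) − y (xⁿ + ∑_{k=0}^{n−1} bₖ xᵏ) ), is asymptotically quasi-homogeneous of type (1, n+1) and order n+1 at infinity, with quasi-homogeneous part f_{α,n}(x,y) = ( y, −ε x^{2n+1} − xⁿ y ). -/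
/-!
After the substitution `(x, y) ↦ (R x, R^{n+1} y)` the first components of `f` and of its
quasi-homogeneous part agree exactly, while the second components differ by the lower-order
terms `−∑ aₖ (Rx)ᵏ − R^{n+1} y ∑ bₖ (Rx)ᵏ`, of degree at most `2n` in `R`. On the unit
circle `|x|, |y| ≤ 1`, so for `R ≥ 1` these terms are bounded by `C R^{2n}` with `C` the sum of
the `|aₖ|` and `|bₖ|`; dividing by `R^{2n+1}` leaves `C / R → 0`, uniformly in `(x, y)`.
-/

open Finset

/-- The polynomial Liénard vector field
`f(x,y) = (y, −(ε x^{2n+1} + ∑_{k=0}^{2n} aₖxᵏ) − y(xⁿ + ∑_{k=0}^{n−1} bₖxᵏ))`. -/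
noncomputable def lienardF (n : ℕ) (ε : ℝ) (a b : ℕ → ℝ) : ℝ × ℝ → ℝ × ℝ :=
  fun p =>
    (p.2,
      -(ε * p.1 ^ (2 * n + 1) + ∑ k ∈ Finset.range (2 * n + 1), a k * p.1 ^ k) -
        p.2 * (p.1 ^ n + ∑ k ∈ Finset.range n, b k * p.1 ^ k))

/-- The quasi-homogeneous part `f_{α,n}(x,y) = (y, −ε x^{2n+1} − xⁿ y)`. -/
noncomputable def lienardQHpart (n : ℕ) (ε : ℝ) : ℝ × ℝ → ℝ × ℝ :=
  fun p => (p.2, -ε * p.1 ^ (2 * n + 1) - p.1 ^ n * p.2)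

section Estimates

variable {R x : ℝ}

lemma abs_le_one_of_sq_add_sq_eq_one {y : ℝ} (h : x ^ 2 + y ^ 2 = 1) : |x| ≤ 1 :=
  abs_le_one_iff_mul_self_le_one.2 (by nlinarith [sq_nonneg y])

lemma abs_mul_le_of_abs_le_one (hR : 0 ≤ R) (hx : |x| ≤ 1) : |R * x| ≤ R := by
  rw [abs_mul, abs_of_nonneg hR]
  exact mul_le_of_le_one_right hR hx

/-- The `j + m ≤ e + 1` form avoids a truncated `m - 1` and also covers the empty sum `m = 0`. -/
lemma pow_mul_abs_sum_mul_pow_le {j m e : ℕ} (hjm : j + m ≤ e + 1) (c : ℕ → ℝ)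
    (hR : 1 ≤ R) (hx : |x| ≤ 1) :
    R ^ j * |∑ k ∈ range m, c k * (R * x) ^ k| ≤ (∑ k ∈ range m, |c k|) * R ^ e := by
  have hR0 : 0 ≤ R := zero_le_one.trans hR
  calc R ^ j * |∑ k ∈ range m, c k * (R * x) ^ k|
      ≤ R ^ j * ∑ k ∈ range m, |c k * (R * x) ^ k| := by
        gcongr
        exact abs_sum_le_sum_abs _ _
    _ = ∑ k ∈ range m, |c k| * (R ^ j * |R * x| ^ k) := by
        rw [mul_sum]
        congr! 1 with k
        rw [abs_mul, abs_pow]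
        ring
    _ ≤ ∑ k ∈ range m, |c k| * R ^ e := by
        gcongr with k hk
        calc R ^ j * |R * x| ^ k ≤ R ^ j * R ^ k := by
              gcongr
              exact abs_mul_le_of_abs_le_one hR0 hx
          _ = R ^ (j + k) := (pow_add R j k).symm
          _ ≤ R ^ e := pow_le_pow_right₀ hR (by simp only [mem_range] at hk; omega)
    _ = (∑ k ∈ range m, |c k|) * R ^ e := (sum_mul _ _ _).symm

lemma abs_zpow_neg_succ_mul_le {t C : ℝ} (hR : 0 < R) (e : ℕ) (ht : |t| ≤ C * R ^ e) :
    |R ^ (-((e : ℤ) + 1)) * t| ≤ C / R := by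
  have hRe : R ^ (-((e : ℤ) + 1)) = (R ^ e * R)⁻¹ := by
    rw [zpow_neg, zpow_add_one₀ hR.ne', zpow_natCast]
  rw [hRe, abs_mul, abs_of_pos (by positivity), inv_mul_le_iff₀ (by positivity)]
  calc |t| ≤ C * R ^ e := ht
    _ = R ^ e * R * (C / R) := by field_simp

end Estimates

section Lienard

variable (n : ℕ) (ε : ℝ) (a b : ℕ → ℝ)

lemma lienardQHpart_quasiHomogeneous (x y R : ℝ) :
    lienardQHpart n ε (R * x, R ^ (n + 1) * y) =
      (R ^ (n + 1) * (lienardQHpart n ε (x, y)).1,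
       R ^ (2 * n + 1) * (lienardQHpart n ε (x, y)).2) := by
  simp only [lienardQHpart, Prod.mk.injEq, true_and]
  ring

lemma lienardF_fst_sub_lienardQHpart_fst (x y R : ℝ) :
    (lienardF n ε a b (R * x, R ^ (n + 1) * y)).1 -
      R ^ (n + 1) * (lienardQHpart n ε (x, y)).1 = 0 := by
  simp [lienardF, lienardQHpart]

lemma lienardF_snd_sub_lienardQHpart_snd (x y R : ℝ) :
    (lienardF n ε a b (R * x, R ^ (n + 1) * y)).2 -
        R ^ (2 * n + 1) * (lienardQHpart n ε (x, y)).2 =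
      -∑ k ∈ range (2 * n + 1), a k * (R * x) ^ k -
        R ^ (n + 1) * y * ∑ k ∈ range n, b k * (R * x) ^ k := by
  simp only [lienardF, lienardQHpart]
  ring

lemma abs_lienardF_snd_sub_lienardQHpart_snd_le {x y R : ℝ} (hR : 1 ≤ R)
    (hxy : x ^ 2 + y ^ 2 = 1) :
    |(lienardF n ε a b (R * x, R ^ (n + 1) * y)).2 -
        R ^ (2 * n + 1) * (lienardQHpart n ε (x, y)).2| ≤
      ((∑ k ∈ range (2 * n + 1), |a k|) + ∑ k ∈ range n, |b k|) * R ^ (2 * n) := by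
  have hx : |x| ≤ 1 := abs_le_one_of_sq_add_sq_eq_one hxy
  have hy : |y| ≤ 1 := abs_le_one_of_sq_add_sq_eq_one (y := x) (by linarith)
  have ha := pow_mul_abs_sum_mul_pow_le (j := 0) (m := 2 * n + 1) (e := 2 * n) (by omega) a hR hx
  have hb := pow_mul_abs_sum_mul_pow_le (j := n + 1) (m := n) (e := 2 * n) (by omega) b hR hx
  rw [pow_zero, one_mul] at ha
  have hby : |R ^ (n + 1) * y * ∑ k ∈ range n, b k * (R * x) ^ k| ≤
      R ^ (n + 1) * |∑ k ∈ range n, b k * (R * x) ^ k| := by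
    rw [abs_mul, abs_mul, abs_of_nonneg (by positivity)]
    gcongr
    exact mul_le_of_le_one_right (by positivity) hy
  rw [lienardF_snd_sub_lienardQHpart_snd, add_mul]
  calc _ ≤ |∑ k ∈ range (2 * n + 1), a k * (R * x) ^ k| +
          |R ^ (n + 1) * y * ∑ k ∈ range n, b k * (R * x) ^ k| :=
        (abs_sub _ _).trans_eq (by rw [abs_neg])
    _ ≤ _ := add_le_add ha (hby.trans hb)

end Lienard

theorem lienard_asymptotically_quasiHomogeneous_general
    (n : ℕ) (ε : ℝ) (a b : ℕ → ℝ) :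
    (∀ x y R : ℝ,
      lienardQHpart n ε (R * x, R ^ (n + 1) * y) =
        (R ^ (n + 1) * (lienardQHpart n ε (x, y)).1,
         R ^ (2 * n + 1) * (lienardQHpart n ε (x, y)).2)) ∧
    (∀ δ : ℝ, 0 < δ → ∃ R₀ : ℝ, ∀ R : ℝ, R₀ ≤ R → ∀ x y : ℝ,
      x ^ 2 + y ^ 2 = 1 →
      |R ^ (-(n + 1 : ℤ)) *
        ((lienardF n ε a b (R * x, R ^ (n + 1) * y)).1 -
          R ^ (n + 1) * (lienardQHpart n ε (x, y)).1)| < δ ∧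
      |R ^ (-(2 * n + 1 : ℤ)) *
        ((lienardF n ε a b (R * x, R ^ (n + 1) * y)).2 -
          R ^ (2 * n + 1) * (lienardQHpart n ε (x, y)).2)| < δ) := by
  refine ⟨lienardQHpart_quasiHomogeneous n ε, fun δ hδ => ?_⟩
  set C := (∑ k ∈ range (2 * n + 1), |a k|) + ∑ k ∈ range n, |b k|
  have hC_div : ∀ᶠ R in Filter.atTop, 1 ≤ R ∧ C / R < δ :=
    (Filter.eventually_ge_atTop 1).and
      ((tendsto_const_nhds.div_atTop Filter.tendsto_id).eventually (gt_mem_nhds hδ))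
  obtain ⟨R₀, hR₀⟩ := Filter.eventually_atTop.1 hC_div
  refine ⟨R₀, fun R hR x y hxy => ?_⟩
  obtain ⟨hR1, hCR⟩ := hR₀ R hR
  refine ⟨by simpa [lienardF_fst_sub_lienardQHpart_fst] using hδ, ?_⟩
  have h := abs_zpow_neg_succ_mul_le (zero_lt_one.trans_le hR1) (2 * n)
    (abs_lienardF_snd_sub_lienardQHpart_snd_le n ε a b hR1 hxy)
  push_cast at h
  exact h.trans_lt hCR

/-- The Liénard vector field is asymptotically quasi-homogeneous of type
`(1, n+1)` and order `n+1` at infinity (`k = n`, `I = {1,2}`), with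
quasi-homogeneous part `(y, −ε x^{2n+1} − xⁿy)`: the part satisfies the
quasi-homogeneity identities of orders `k+α₁ = n+1` and `k+α₂ = 2n+1`, and the
renormalized differences tend to `0` as `R → +∞`, uniformly on the unit
sphere `x² + y² = 1`. -/
theorem lienard_asymptotically_quasiHomogeneous
    (n : ℕ) (hn : 1 ≤ n) (ε : ℝ) (hε : ε ≠ 0) (a b : ℕ → ℝ) :
    (∀ x y R : ℝ,
      lienardQHpart n ε (R * x, R ^ (n + 1) * y) =
        (R ^ (n + 1) * (lienardQHpart n ε (x, y)).1,
         R ^ (2 * n + 1) * (lienardQHpart n ε (x, y)).2)) ∧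
    (∀ δ : ℝ, 0 < δ → ∃ R₀ : ℝ, ∀ R : ℝ, R₀ ≤ R → ∀ x y : ℝ,
      x ^ 2 + y ^ 2 = 1 →
      |R ^ (-(n + 1 : ℤ)) *
        ((lienardF n ε a b (R * x, R ^ (n + 1) * y)).1 -
          R ^ (n + 1) * (lienardQHpart n ε (x, y)).1)| < δ ∧
      |R ^ (-(2 * n + 1 : ℤ)) *
        ((lienardF n ε a b (R * x, R ^ (n + 1) * y)).2 -
          R ^ (2 * n + 1) * (lienardQHpart n ε (x, y)).2)| < δ) :=
  lienard_asymptotically_quasiHomogeneous_general n ε a b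
end

section
/- The set of points (x₁, x₂) ∈ ℝ² satisfying the three equations (x₁² − x₂) − x₁(x₁³(x₁² − x₂) + (1/3)x₁³x₂) = 0, (1/3)x₁³ − 2x₂(x₁³(x₁² − x₂) + (1/3)x₁³x₂) = 0, and x₁⁴ + 2x₂² = 1 is exactly the four-element set { ( ±((15 + 3√3)/22)^{1/4}, √((7 − 3√3)/44) ), ( ±((15 − 3√3)/22)^{1/4}, √((7 + 3√3)/44) ) }. -/
/-!
Both components of the field factor through `F = 1 + 4x₂² - 6x₁²x₂`:
`ẋ₂ = x₁³ F / 3` and `ẋ₁ = -x₂ F / 3 - (x₁² - 2x₂/3)(x₁⁴ + 2x₂² - 1)`. On the horizon `x₁ = 0` would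
force `x₂ = 0`, so the equilibria are the zeros of `F` there. Then `x₂ > 0`, and squaring
`6x₁²x₂ = 1 + 4x₂²` (both sides positive, so nothing is lost) with `x₁⁴ = 1 - 2x₂²` gives
`88x₂⁴ - 28x₂² + 1 = 0`, i.e. `x₂² = (7 ∓ 3√3)/44` and `x₁⁴ = (15 ± 3√3)/22`.
-/

lemma pow_four_eq_iff_of_nonneg {c : ℝ} (hc : 0 ≤ c) (x : ℝ) :
    x ^ 4 = c ↔ x = c ^ ((1 : ℝ) / 4) ∨ x = -c ^ ((1 : ℝ) / 4) := by
  have hroot : (c ^ ((1 : ℝ) / 4)) ^ 4 = c := by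
    simpa using Real.rpow_inv_natCast_pow hc (n := 4) four_ne_zero
  conv_lhs => rw [← hroot]
  rw [pow_eq_pow_iff_of_ne_zero four_ne_zero]
  simp [show Even 4 by decide]

namespace KeyfitzKranzer

lemma horizon_equilibrium_iff (x y : ℝ) :
    ((x ^ 2 - y) - x * (x ^ 3 * (x ^ 2 - y) + (1 / 3) * x ^ 3 * y) = 0 ∧
      (1 / 3) * x ^ 3 - 2 * y * (x ^ 3 * (x ^ 2 - y) + (1 / 3) * x ^ 3 * y) = 0 ∧
      x ^ 4 + 2 * y ^ 2 = 1) ↔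
    6 * x ^ 2 * y = 1 + 4 * y ^ 2 ∧ x ^ 4 + 2 * y ^ 2 = 1 := by
  constructor
  · rintro ⟨h₁, h₂, h₃⟩
    have hx : x ≠ 0 := by
      rintro rfl
      have hy : y = 0 := by linarith
      simp [hy] at h₃
    have hF : x ^ 3 * (1 + 4 * y ^ 2 - 6 * x ^ 2 * y) = 0 := by linear_combination 3 * h₂
    refine ⟨?_, h₃⟩
    linear_combination -(mul_eq_zero.mp hF).resolve_left (pow_ne_zero 3 hx)
  · rintro ⟨hF, h₃⟩
    refine ⟨?_, ?_, h₃⟩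
    · linear_combination (y / 3) * hF - (x ^ 2 - 2 * y / 3) * h₃
    · linear_combination -(x ^ 3 / 3) * hF

lemma factor_eq_zero_and_horizon_iff (x y : ℝ) :
    (6 * x ^ 2 * y = 1 + 4 * y ^ 2 ∧ x ^ 4 + 2 * y ^ 2 = 1) ↔
      0 < y ∧ 88 * y ^ 4 - 28 * y ^ 2 + 1 = 0 ∧ x ^ 4 + 2 * y ^ 2 = 1 := by
  constructor
  · rintro ⟨hF, h₃⟩
    have hy : 0 < y := by
      have : 0 < 6 * x ^ 2 * y := by rw [hF]; positivity
      exact pos_of_mul_pos_right this (by positivity)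
    refine ⟨hy, ?_, h₃⟩
    linear_combination (-(6 * x ^ 2 * y + 1 + 4 * y ^ 2)) * hF + 36 * y ^ 2 * h₃
  · rintro ⟨hy, hq, h₃⟩
    refine ⟨(sq_eq_sq₀ (by positivity) (by positivity)).mp ?_, h₃⟩
    linear_combination 36 * y ^ 2 * h₃ - hq

lemma quartic_eq_zero_iff (y : ℝ) :
    88 * y ^ 4 - 28 * y ^ 2 + 1 = 0 ↔
      y ^ 2 = (7 - 3 * √3) / 44 ∨ y ^ 2 = (7 + 3 * √3) / 44 := by
  have h3 : √3 ^ 2 = 3 := Real.sq_sqrt (by norm_num)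
  rw [← sub_eq_zero (a := y ^ 2), ← sub_eq_zero (a := y ^ 2), ← mul_eq_zero]
  constructor <;> intro h
  · linear_combination h / 88 - 9 / 1936 * h3
  · linear_combination 88 * h + 9 / 22 * h3

lemma pos_and_sq_eq_and_horizon_iff {c d : ℝ} (hc : 0 ≤ c) (hd : 0 < d) (hcd : c + 2 * d = 1)
    (x y : ℝ) :
    (0 < y ∧ y ^ 2 = d ∧ x ^ 4 + 2 * y ^ 2 = 1) ↔
      (x = c ^ ((1 : ℝ) / 4) ∨ x = -c ^ ((1 : ℝ) / 4)) ∧ y = √d := by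
  rw [← pow_four_eq_iff_of_nonneg hc]
  constructor
  · rintro ⟨hy, hyd, h⟩
    exact ⟨by linear_combination h - 2 * hyd - hcd, by rw [← hyd, Real.sqrt_sq hy.le]⟩
  · rintro ⟨hx, rfl⟩
    have hyd := Real.sq_sqrt hd.le
    exact ⟨Real.sqrt_pos.2 hd, hyd, by linear_combination hx + 2 * hyd + hcd⟩

end KeyfitzKranzer

open KeyfitzKranzer in
/-- The equilibria at infinity of the Keyfitz–Kranzer system: the solution set
of the three equations characterizing equilibria on the horizon
`{x₁⁴ + 2x₂² = 1}` of the desingularized vector field is exactly the four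
points `(±((15±3√3)/22)^{1/4}, √((7∓3√3)/44))`. -/
theorem keyfitzKranzer_equilibria_at_infinity :
    {x : ℝ × ℝ |
        (x.1 ^ 2 - x.2) -
          x.1 * (x.1 ^ 3 * (x.1 ^ 2 - x.2) + (1 / 3) * x.1 ^ 3 * x.2) = 0 ∧
        (1 / 3) * x.1 ^ 3 -
          2 * x.2 * (x.1 ^ 3 * (x.1 ^ 2 - x.2) + (1 / 3) * x.1 ^ 3 * x.2) = 0 ∧
        x.1 ^ 4 + 2 * x.2 ^ 2 = 1} =
      {(((15 + 3 * Real.sqrt 3) / 22) ^ ((1 : ℝ) / 4),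
          Real.sqrt ((7 - 3 * Real.sqrt 3) / 44)),
        (-(((15 + 3 * Real.sqrt 3) / 22) ^ ((1 : ℝ) / 4)),
          Real.sqrt ((7 - 3 * Real.sqrt 3) / 44)),
        (((15 - 3 * Real.sqrt 3) / 22) ^ ((1 : ℝ) / 4),
          Real.sqrt ((7 + 3 * Real.sqrt 3) / 44)),
        (-(((15 - 3 * Real.sqrt 3) / 22) ^ ((1 : ℝ) / 4)),
          Real.sqrt ((7 + 3 * Real.sqrt 3) / 44))} := by
  have h3 : √3 ^ 2 = 3 := Real.sq_sqrt (by norm_num)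
  have h3₀ : 0 ≤ √3 := Real.sqrt_nonneg 3
  have hd_sub : 0 < (7 - 3 * √3) / 44 := by nlinarith
  have hd_add : 0 < (7 + 3 * √3) / 44 := by positivity
  have hc_sub : 0 ≤ (15 - 3 * √3) / 22 := by nlinarith
  have hc_add : 0 ≤ (15 + 3 * √3) / 22 := by positivity
  ext ⟨x, y⟩
  simp only [Set.mem_ofPred_eq, Set.mem_insert_iff, Set.mem_singleton_iff, Prod.mk.injEq]
  rw [horizon_equilibrium_iff, factor_eq_zero_and_horizon_iff, quartic_eq_zero_iff,
    or_and_right, and_or_left, pos_and_sq_eq_and_horizon_iff hc_add hd_sub (by ring),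
    pos_and_sq_eq_and_horizon_iff hc_sub hd_add (by ring), or_and_right, or_and_right, or_assoc]
end
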